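/- Let H be the creation matrix of size (m+1)×(m+1). Then the matrix exponential e^{Hx} has entries (e^{Hx})_{ij} = C(i,j) x^{i-j} for i ≥ j and 0 otherwise; i.e., e^{Hx} equals the generalized Pascal matrix P(x). -/

import Mathlib

/-- The creation matrix: `(H)_{ij} = i` if `i = j+1`, else `0`. -/
def creationMatrix (m : ℕ) : Matrix (Fin (m+1)) (Fin (m+1)) ℝ :=
  Matrix.of fun i j => if (i : ℕ) = (j : ℕ) + 1 then (i : ℝ) else 0

/-- The generalized Pascal matrix `P(x)`. -/
def pascalMatrix (m : ℕ) (x : ℝ) : Matrix (Fin (m+1)) (Fin (m+1)) ℝ :=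
  Matrix.of fun i j =>
    if (j : ℕ) ≤ (i : ℕ) then ((i : ℕ).choose (j : ℕ) : ℝ) * x ^ ((i : ℕ) - (j : ℕ)) else 0

/-! `H` is nilpotent: `H ^ k` lives on the `k`-th subdiagonal with entries `i (i-1) ⋯ (i-k+1)`,
so `H ^ (m+1) = 0` and the exponential series of `x • H` is a finite sum whose `k`-th term is
`choose i (i-k) * x ^ k` on that subdiagonal. -/

open Finset

theorem NormedSpace.exp_eq_sum_range_of_pow_eq_zero (𝕂 : Type*) {𝔸 : Type*} [Field 𝕂] [CharZero 𝕂]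
    [Ring 𝔸] [Algebra 𝕂 𝔸] [TopologicalSpace 𝔸] [IsTopologicalRing 𝔸] {a : 𝔸} {n : ℕ}
    (h : a ^ n = 0) : NormedSpace.exp a = ∑ k ∈ range n, (k.factorial⁻¹ : 𝕂) • a ^ k := by
  rw [NormedSpace.exp_eq_tsum 𝕂]
  refine tsum_eq_sum fun k hk => ?_
  rw [pow_eq_zero_of_le (by simpa using hk) h, smul_zero]

theorem Finset.sum_range_ite_eq_add {M : Type*} [AddCommMonoid M] {n i : ℕ} (j : ℕ) (hi : i < n)
    (f : ℕ → M) :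
    ∑ k ∈ range n, (if i = j + k then f k else 0) = if j ≤ i then f (i - j) else 0 := by
  split_ifs with hji
  · rw [sum_congr rfl fun k _ => if_congr (by omega : i = j + k ↔ i - j = k) rfl rfl,
      sum_ite_eq, if_pos (mem_range.2 (by omega))]
  · exact sum_eq_zero fun k _ => if_neg (by omega)

namespace creationMatrix

variable {m : ℕ}

theorem apply_zero_left (l : Fin (m + 1)) : creationMatrix m 0 l = 0 := by
  simp [creationMatrix]

theorem apply_succ_left (i : Fin m) (l : Fin (m + 1)) :
    creationMatrix m i.succ l = if l = i.castSucc then (i + 1 : ℝ) else 0 := by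
  simp [creationMatrix, Fin.ext_iff, eq_comm]

theorem pow_apply (k : ℕ) (i j : Fin (m + 1)) :
    (creationMatrix m ^ k) i j = if (i : ℕ) = j + k then ((i : ℕ).descFactorial k : ℝ) else 0 := by
  induction k generalizing i with
  | zero => simp [Matrix.one_apply, Fin.ext_iff]
  | succ k ih =>
    rw [pow_succ', Matrix.mul_apply]
    induction i using Fin.cases with
    | zero => simp [apply_zero_left]
    | succ i =>
      simp only [apply_succ_left, ite_mul, zero_mul, sum_ite_eq', mem_univ, if_true, ih,
        Fin.val_succ, Fin.val_castSucc, Nat.succ_descFactorial_succ]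
      split_ifs <;> first | omega | push_cast; ring

theorem pow_eq_zero : creationMatrix m ^ (m + 1) = 0 := by
  ext i j
  rw [pow_apply, if_neg (by omega), Matrix.zero_apply]

theorem inv_factorial_smul_pow_smul_apply (x : ℝ) (k : ℕ) (i j : Fin (m + 1)) :
    ((k.factorial⁻¹ : ℝ) • (x • creationMatrix m) ^ k) i j =
      if (i : ℕ) = j + k then ((i : ℕ).choose j : ℝ) * x ^ k else 0 := by
  rw [smul_pow, Matrix.smul_apply, Matrix.smul_apply, pow_apply, smul_eq_mul, smul_eq_mul]
  split_ifs with hi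
  · have hchoose : ((i : ℕ).descFactorial k : ℝ) = k.factorial * (i : ℕ).choose j := by
      rw [Nat.descFactorial_eq_factorial_mul_choose, hi, Nat.choose_symm_add]
      push_cast; rfl
    rw [hchoose]
    field_simp
  · simp

end creationMatrix

theorem exp_creationMatrix_eq_pascal (m : ℕ) (x : ℝ) :
    NormedSpace.exp (x • creationMatrix m) = pascalMatrix m x := by
  have hnil : (x • creationMatrix m) ^ (m + 1) = 0 := by
    rw [smul_pow, creationMatrix.pow_eq_zero, smul_zero]
  ext i j
  rw [NormedSpace.exp_eq_sum_range_of_pow_eq_zero ℝ hnil, Matrix.sum_apply]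
  simp only [creationMatrix.inv_factorial_smul_pow_smul_apply]
  rw [sum_range_ite_eq_add _ i.isLt]
  rfl
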